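/- Let A be a commutative algebra and I an abstract continuity ideal. For each cardinal κ not exceeding the cardinality of the set 𝔓 of prime ideals of the form (I : a), a ∈ A, there exists a subfamily 𝒢 ⊆ 𝔓 with |𝒢| ≥ κ such that for every a ∈ ⋃{P : P ∈ 𝒢}, the set {P ∈ 𝒢 : a ∉ P} has cardinality strictly less than κ. -/

import Mathlib

/-! If no subfamily works, every subfamily of size `≥ κ` has a member containing some `a` while
at least `κ` of its members avoid `a`. Discarding the members that contain `a` and iterating gives
elements `a n` and primes `P n = (I : p)` with `a n ∈ P n` but `a i ∉ P n` for `i < n`. Then `p`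
lies in `(I : a 0 ⋯ a n)` but, by primality of `P n`, not in `(I : a 0 ⋯ a (n - 1))`, so the chain
of quotient ideals along `a` never stabilizes. -/

/-- The quotient ideal `(J : a) = {x | a * x ∈ J}`. -/
def quotIdeal {A : Type*} [CommRing A] (J : Ideal A) (a : A) : Ideal A where
  carrier := {x | a * x ∈ J}
  zero_mem' := by simp
  add_mem' := by
    intro x y hx hy
    simpa [mul_add] using J.add_mem hx hy
  smul_mem' := by
    intro c x hx
    simp only [smul_eq_mul, Set.mem_setOf_eq, mul_left_comm a c x] at *
    exact J.mul_mem_left c hx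

/-- An ideal `I` is an abstract continuity ideal if for every sequence
`(a n)` the increasing chain of quotient ideals eventually stabilizes. -/
def AbstractContinuityIdeal {A : Type*} [CommRing A] (I : Ideal A) : Prop :=
  ∀ a : ℕ → A, ∃ n₀ : ℕ, ∀ n ≥ n₀,
    quotIdeal I (∏ i ∈ Finset.range n, a i) =
      quotIdeal I (∏ i ∈ Finset.range (n + 1), a i)

theorem mem_quotIdeal {A : Type*} [CommRing A] (J : Ideal A) (a x : A) :
    x ∈ quotIdeal J a ↔ a * x ∈ J := Iff.rfl

theorem quotIdeal_lt_mul {A : Type*} [CommRing A] {I : Ideal A} {p b c : A}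
    (hc : c ∉ quotIdeal I p) (hb : b ∈ quotIdeal I p) :
    quotIdeal I c < quotIdeal I (c * b) := by
  rw [mem_quotIdeal] at hc hb
  refine SetLike.lt_iff_le_and_exists.mpr ⟨fun x hx => ?_, p, ?_, ?_⟩
  · rw [mem_quotIdeal, mul_right_comm]
    exact I.mul_mem_right b hx
  · rw [mem_quotIdeal, mul_comm, ← mul_assoc, mul_right_comm]
    exact I.mul_mem_right c hb
  · rwa [mem_quotIdeal, mul_comm]

theorem exists_dichotomy_family_or_exists_separated_seq {S A : Type*} [SetLike S A]
    (𝔓 : Set S) (κ : Cardinal) (hκ : κ ≤ Cardinal.mk 𝔓) :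
    (∃ 𝒢 ⊆ 𝔓, κ ≤ Cardinal.mk 𝒢 ∧
      ∀ a : A, (∃ P ∈ 𝒢, a ∈ P) → Cardinal.mk {P : S // P ∈ 𝒢 ∧ a ∉ P} < κ) ∨
    ∃ (a : ℕ → A) (P : ℕ → S), (∀ n, P n ∈ 𝔓) ∧ (∀ n, a n ∈ P n) ∧ ∀ n, ∀ i < n, a i ∉ P n := by
  refine or_iff_not_imp_left.mpr fun hnone => ?_
  push Not at hnone
  have : Nonempty A := let ⟨a, _⟩ := hnone 𝔓 subset_rfl hκ; ⟨a⟩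
  choose! f hf_mem hf_large using hnone
  set G : ℕ → Set S := fun n => (fun 𝒢 => {P ∈ 𝒢 | f 𝒢 ∉ P})^[n] 𝔓
  have hG_succ : ∀ n, G (n + 1) = {P ∈ G n | f (G n) ∉ P} := fun n =>
    Function.iterate_succ_apply' _ n 𝔓
  have hG_anti : Antitone G := antitone_nat_of_succ_le fun n => by
    rw [hG_succ]
    exact Set.sep_subset _ _
  have hG_large : ∀ n, G n ⊆ 𝔓 ∧ κ ≤ Cardinal.mk (G n) := by
    intro n
    induction n with
    | zero => exact ⟨subset_rfl, hκ⟩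
    | succ n ih =>
      rw [hG_succ]
      exact ⟨(Set.sep_subset _ _).trans ih.1, hf_large _ ih.1 ih.2⟩
  choose P hP_mem hP_contains using fun n => hf_mem (G n) (hG_large n).1 (hG_large n).2
  refine ⟨fun n => f (G n), P, fun n => (hG_large n).1 (hP_mem n), hP_contains, ?_⟩
  intro n i hi
  have hPn : P n ∈ G (i + 1) := hG_anti hi (hP_mem n)
  rw [hG_succ] at hPn
  exact hPn.2

/-- Dichotomy lemma: for `I` an abstract continuity ideal and any cardinal `κ`
not exceeding the cardinality of the set `𝔓` of primes of the form `(I : a)`,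
there is a subfamily `𝒢 ⊆ 𝔓` with `|𝒢| ≥ κ` such that for every
`a ∈ ⋃ 𝒢`, the set `{P ∈ 𝒢 : a ∉ P}` has cardinality `< κ`. -/
theorem dichotomy_lemma {A : Type*} [CommRing A]
    (I : Ideal A) (hI : AbstractContinuityIdeal I)
    (𝔓 : Set (Ideal A)) (h𝔓 : 𝔓 = {P | (∃ a : A, P = quotIdeal I a) ∧ P.IsPrime})
    (κ : Cardinal) (hκ : κ ≤ Cardinal.mk 𝔓) :
    ∃ 𝒢 ⊆ 𝔓, κ ≤ Cardinal.mk 𝒢 ∧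
      ∀ a : A, (∃ P ∈ 𝒢, a ∈ P) →
        Cardinal.mk {P : Ideal A // P ∈ 𝒢 ∧ a ∉ P} < κ := by
  obtain hfamily | ⟨a, P, hP𝔓, haP, hsep⟩ :=
    exists_dichotomy_family_or_exists_separated_seq 𝔓 κ hκ
  · exact hfamily
  exfalso
  obtain ⟨n, hn⟩ := hI a
  obtain ⟨⟨p, hp⟩, hprime⟩ := h𝔓 ▸ hP𝔓 n
  have hsep_n := hsep n
  have ha_n := haP n
  rw [hp] at hprime hsep_n ha_n
  have hprod : ∏ i ∈ Finset.range n, a i ∉ quotIdeal I p := fun hmem => by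
    obtain ⟨i, hi, hai⟩ := hprime.prod_mem_iff.mp hmem
    exact hsep_n i (Finset.mem_range.mp hi) hai
  have hlt := quotIdeal_lt_mul hprod ha_n
  rw [← Finset.prod_range_succ] at hlt
  exact hlt.ne (hn n le_rfl)
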